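/- Let F₁, F₂ be distributions on [0,∞) with F₂ ∈ L(γ) for some γ ≥ 0. Assume: (a) for i = 1,2 and all t > 0, liminf_{x→∞} F̄ᵢ(x-t)/F̄ᵢ(x) ≥ e^{γt}; and (b) for all t > 0, |F̄₁(x-t) - e^{γt}F̄₁(x)| = o(F̄₂(x)) as x → ∞. Then F₁*F₂ ∈ L(γ). -/

import Mathlib

/-
Fix `t > 0`, write `e = e^{γt}` and `H = F₁ * F₂`, and choose a large `B`. With `X ~ F₁` and
`Y ~ F₂` independent, splitting the event `X + Y > x` according to `X ≤ x - B` or not,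
`H̄(x) = ∫_{u ≤ x - B} F̄₂(x - u) dF₁(u) + ∫ F̄₁(max (x - y) (x - B)) dF₂(y)`,
and likewise for `H̄(x - t)` with the cut at `x - t - B`. In the first integral `F̄₂` is only
evaluated beyond `B`, where `F₂ ∈ L(γ)` gives `F̄₂(· - t) ≈ e F̄₂`; in the second `F̄₁` is only
evaluated beyond `x - B`, where (b) gives `F̄₁(· - t) = e F̄₁ + o(F̄₂(x - B))`, and
`F̄₂(x - B) = O(F̄₂(x)) = O(H̄(x))` because `F₁ ≥ 0`. The two cuts differ by the strip
`x - t - B < X ≤ x - B`, of mass about `(e - 1) F̄₂(B) F̄₁(x - B)`. When `γ > 0`, condition (a)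
on `F₁` together with `F₂ ∈ L(γ)` makes `F̄₂(B) F̄₁(x - B)` an arbitrarily small fraction of
`H̄(x)` for suitable `B`.
-/

open MeasureTheory Filter Set Asymptotics

/-- The tail `F̄(x) = μ((x,∞))` of a distribution `μ` on `ℝ`. -/
noncomputable def tail (μ : MeasureTheory.Measure ℝ) (x : ℝ) : ℝ := (μ (Set.Ioi x)).toReal

/-- Convolution of two distributions on `ℝ`. -/
noncomputable def mconv (μ ν : MeasureTheory.Measure ℝ) : MeasureTheory.Measure ℝ :=
  MeasureTheory.Measure.map (fun p : ℝ × ℝ => p.1 + p.2) (μ.prod ν)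

/-- `iconv μ k` is the `k`-fold convolution `μ^{*k}` (with `μ^{*0} = δ₀`). -/
noncomputable def iconv (μ : MeasureTheory.Measure ℝ) : ℕ → MeasureTheory.Measure ℝ
  | 0 => MeasureTheory.Measure.dirac 0
  | n + 1 => mconv (iconv μ n) μ

/-- The class `L(γ)`: `F̄(x-t) ~ e^{γt} F̄(x)` as `x → ∞`, for every `t`. -/
def MemL (γ : ℝ) (μ : MeasureTheory.Measure ℝ) : Prop :=
  ∀ t : ℝ, Filter.Tendsto (fun x => tail μ (x - t) / tail μ x) Filter.atTop
    (nhds (Real.exp (γ * t)))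

/-- The class `OS`: `limsup_{x→∞} (F*F)̄(x) / F̄(x) < ∞`. -/
def MemOS (μ : MeasureTheory.Measure ℝ) : Prop :=
  Filter.IsBoundedUnder (· ≤ ·) Filter.atTop (fun x => tail (mconv μ μ) x / tail μ x)

open Topology

lemma abs_integral_sub_mul_le {α : Type*} [MeasurableSpace α] {μ : Measure α} {f g r : α → ℝ}
    (hf : Integrable f μ) (hg : Integrable g μ) (hr : Integrable r μ) (c : ℝ)
    (h : ∀ᵐ u ∂μ, |f u - c * g u| ≤ r u) :
    |∫ u, f u ∂μ - c * ∫ u, g u ∂μ| ≤ ∫ u, r u ∂μ := by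
  rw [← integral_const_mul, ← integral_sub hf (hg.const_mul c)]
  exact norm_integral_le_of_norm_le (f := fun u => f u - c * g u) hr h

lemma tendsto_div_of_isLittleO_sub_mul {α : Type*} {l : Filter α} {f g : α → ℝ} {c : ℝ}
    (hf : ∀ᶠ x in l, f x ≠ 0) (h : (fun x => g x - c * f x) =o[l] f) :
    Tendsto (fun x => g x / f x) l (𝓝 c) := by
  have := h.tendsto_div_nhds_zero.add_const c
  rw [zero_add] at this
  refine this.congr' ?_
  filter_upwards [hf] with x hx
  rw [sub_div, mul_div_cancel_right₀ _ hx, sub_add_cancel]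

lemma tendsto_sub_div_of_forall_pos {f : ℝ → ℝ} {γ : ℝ} (hf : ∀ᶠ x in atTop, f x ≠ 0)
    (h : ∀ t > (0 : ℝ), Tendsto (fun x => f (x - t) / f x) atTop (𝓝 (Real.exp (γ * t))))
    (t : ℝ) : Tendsto (fun x => f (x - t) / f x) atTop (𝓝 (Real.exp (γ * t))) := by
  rcases lt_trichotomy t 0 with ht | rfl | ht
  · have := ((h (-t) (neg_pos.2 ht)).comp
      (tendsto_atTop_add_const_right atTop (-t) tendsto_id)).inv₀ (Real.exp_ne_zero _)
    simpa [Function.comp_def, inv_div, ← Real.exp_neg, ← sub_eq_add_neg] using this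
  · simp only [sub_zero, mul_zero, Real.exp_zero]
    exact tendsto_const_nhds.congr' (hf.mono fun x hx => (div_self hx).symm)
  · exact h t ht

section Tail

variable (μ ν : Measure ℝ)

lemma tail_nonneg (x : ℝ) : 0 ≤ tail μ x := ENNReal.toReal_nonneg

lemma tail_antitone [IsFiniteMeasure μ] : Antitone (tail μ) := fun _ _ h =>
  measureReal_mono (Ioi_subset_Ioi h)

lemma tail_le_one [IsProbabilityMeasure μ] (x : ℝ) : tail μ x ≤ 1 := measureReal_le_one

lemma tail_sub_tail [IsFiniteMeasure μ] {a b : ℝ} (hab : a ≤ b) :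
    tail μ a - tail μ b = μ.real (Ioc a b) := by
  rw [tail, tail, ← measureReal_def, ← measureReal_def, ← Ioc_union_Ioi_eq_Ioi hab,
    measureReal_union Ioc_disjoint_Ioi_same measurableSet_Ioi, add_sub_cancel_right]

lemma tail_restrict_Ioi (c z : ℝ) : tail (μ.restrict (Ioi c)) z = tail μ (max z c) := by
  rw [tail, tail, Measure.restrict_apply measurableSet_Ioi, Ioi_inter_Ioi]

lemma integrable_tail_comp [IsFiniteMeasure μ] [IsFiniteMeasure ν] {f : ℝ → ℝ}
    (hf : Measurable f) : Integrable (fun u => tail ν (f u)) μ :=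
  Integrable.of_bound ((tail_antitone ν).measurable.comp hf).aestronglyMeasurable
    (ν.real univ) (Eventually.of_forall fun u => by
      rw [Real.norm_of_nonneg (tail_nonneg ν _)]; exact measureReal_mono (subset_univ _))

end Tail

section Convolution

variable (μ ν : Measure ℝ)

instance [IsFiniteMeasure μ] [IsFiniteMeasure ν] : IsFiniteMeasure (mconv μ ν) :=
  Measure.isFiniteMeasure_map _ _

lemma mconv_apply_Ioi [SFinite μ] [SFinite ν] (a : ℝ) :
    mconv μ ν (Ioi a) = ∫⁻ u, ν (Ioi (a - u)) ∂μ := by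
  rw [mconv, Measure.map_apply measurable_add measurableSet_Ioi,
    Measure.prod_apply (measurable_add measurableSet_Ioi)]
  refine lintegral_congr fun u => congrArg ν ?_
  ext y; simp [sub_lt_iff_lt_add']

lemma mconv_apply_Ioi' [SFinite μ] [SFinite ν] (a : ℝ) :
    mconv μ ν (Ioi a) = ∫⁻ y, μ (Ioi (a - y)) ∂ν := by
  rw [mconv, Measure.map_apply measurable_add measurableSet_Ioi,
    Measure.prod_apply_symm (measurable_add measurableSet_Ioi)]
  refine lintegral_congr fun y => congrArg μ ?_
  ext u; simp [sub_lt_iff_lt_add]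

lemma tail_mconv [IsFiniteMeasure μ] [IsFiniteMeasure ν] (a : ℝ) :
    tail (mconv μ ν) a = ∫ u, tail ν (a - u) ∂μ := by
  have hmeas : Measurable fun u => ν (Ioi (a - u)) :=
    Monotone.measurable fun _ _ h => measure_mono (Ioi_subset_Ioi (by linarith))
  rw [tail, mconv_apply_Ioi, ← integral_toReal hmeas.aemeasurable
    (ae_of_all _ fun _ => measure_lt_top _ _)]
  rfl

lemma tail_mconv' [IsFiniteMeasure μ] [IsFiniteMeasure ν] (a : ℝ) :
    tail (mconv μ ν) a = ∫ y, tail μ (a - y) ∂ν := by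
  have hmeas : Measurable fun u => μ (Ioi (a - u)) :=
    Monotone.measurable fun _ _ h => measure_mono (Ioi_subset_Ioi (by linarith))
  rw [tail, mconv_apply_Ioi', ← integral_toReal hmeas.aemeasurable
    (ae_of_all _ fun _ => measure_lt_top _ _)]
  rfl

lemma mconv_restrict_add_restrict_compl [SFinite μ] [SFinite ν] {s : Set ℝ}
    (hs : MeasurableSet s) : mconv (μ.restrict s) ν + mconv (μ.restrict sᶜ) ν = mconv μ ν := by
  rw [mconv, mconv, ← Measure.map_add _ _ measurable_add, ← Measure.add_prod,
    Measure.restrict_add_restrict_compl hs, mconv]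

lemma tail_mconv_eq_setIntegral_add_integral [IsFiniteMeasure μ] [IsFiniteMeasure ν] (a c : ℝ) :
    tail (mconv μ ν) a =
      ∫ u in Iic c, tail ν (a - u) ∂μ + ∫ y, tail μ (max (a - y) c) ∂ν := by
  rw [← mconv_restrict_add_restrict_compl μ ν (measurableSet_Iic (a := c)), tail,
    Measure.add_apply, ENNReal.toReal_add (measure_ne_top _ _) (measure_ne_top _ _), ← tail,
    ← tail, tail_mconv, tail_mconv', compl_Iic]
  simp only [tail_restrict_Ioi]

lemma tail_mconv_sub_eq_setIntegral_add_integral [IsFiniteMeasure μ] [IsFiniteMeasure ν]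
    (a c t : ℝ) :
    tail (mconv μ ν) (a - t) =
      ∫ u in Iic (c - t), tail ν (a - t - u) ∂μ + ∫ y, tail μ (max (a - y) c - t) ∂ν := by
  rw [tail_mconv_eq_setIntegral_add_integral μ ν (a - t) (c - t)]
  congr 1
  refine integral_congr_ae (ae_of_all _ fun y => ?_)
  simp only [← max_sub_sub_right, sub_right_comm a t]

lemma tail_mconv_eq_setIntegral_add_setIntegral_add_integral [IsFiniteMeasure μ]
    [IsFiniteMeasure ν] (a : ℝ) {b c : ℝ} (hbc : b ≤ c) :
    tail (mconv μ ν) a = ∫ u in Iic b, tail ν (a - u) ∂μ + ∫ u in Ioc b c, tail ν (a - u) ∂μ +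
      ∫ y, tail μ (max (a - y) c) ∂ν := by
  have hint : Integrable (fun u => tail ν (a - u)) μ := integrable_tail_comp μ ν (by fun_prop)
  rw [tail_mconv_eq_setIntegral_add_integral μ ν a c, ← Iic_union_Ioc_eq_Iic hbc,
    setIntegral_union (Iic_disjoint_Ioc le_rfl) measurableSet_Ioc hint.integrableOn
      hint.integrableOn]

end Convolution

lemma tail_le_tail_mconv {μ : Measure ℝ} (ν : Measure ℝ) [IsProbabilityMeasure μ]
    [IsFiniteMeasure ν] (hμ : μ (Iio 0) = 0) (a : ℝ) : tail ν a ≤ tail (mconv μ ν) a := by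
  have h_nonneg : ∀ᵐ u ∂μ, 0 ≤ u := by
    rw [ae_iff]; simpa [← Iio_def] using hμ
  rw [tail_mconv]
  calc tail ν a = ∫ _, tail ν a ∂μ := by simp
    _ ≤ ∫ u, tail ν (a - u) ∂μ :=
      integral_mono_ae (integrable_const _) (integrable_tail_comp μ ν (by fun_prop))
        (h_nonneg.mono fun u hu => tail_antitone ν (by linarith))

lemma sum_tail_mul_measureReal_Ioc_le_tail_mconv (μ ν : Measure ℝ) [IsFiniteMeasure μ]
    [IsFiniteMeasure ν] (x B : ℝ) (N : ℕ) :
    ∑ j ∈ Finset.range N, tail μ (x - (B + j)) * ν.real (Ioc (B + j) (B + j + 1)) ≤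
      tail (mconv μ ν) x := by
  have hdisj : (Finset.range N : Set ℕ).PairwiseDisjoint
      fun j : ℕ => Ioi (x - (B + j)) ×ˢ Ioc (B + j) (B + j + 1) := by
    intro i _ j _ hij
    refine Set.disjoint_left.2 fun p hi hj => ?_
    simp only [mem_prod, mem_Ioc] at hi hj
    rcases lt_or_gt_of_ne hij with h | h
    · have : (i : ℝ) + 1 ≤ j := by exact_mod_cast h
      linarith
    · have : (j : ℝ) + 1 ≤ i := by exact_mod_cast h
      linarith
  rw [tail, mconv, Measure.map_apply measurable_add measurableSet_Ioi, ← measureReal_def]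
  simp_rw [tail, ← measureReal_def, ← measureReal_prod_prod]
  rw [← measureReal_biUnion_finset hdisj fun _ _ => measurableSet_Ioi.prod measurableSet_Ioc]
  refine measureReal_mono fun p hp => ?_
  simp only [mem_iUnion, mem_prod, mem_Ioi, mem_Ioc] at hp
  obtain ⟨j, -, h₁, h₂, -⟩ := hp
  simp only [mem_preimage, mem_Ioi]
  linarith

lemma setIntegral_tail_Ioc_le (μ ν : Measure ℝ) [IsFiniteMeasure μ] [IsFiniteMeasure ν]
    (x : ℝ) {a b : ℝ} (hab : a ≤ b) :
    ∫ u in Ioc a b, tail ν (x - u) ∂μ ≤ tail ν (x - b) * (tail μ a - tail μ b) := by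
  calc ∫ u in Ioc a b, tail ν (x - u) ∂μ ≤ ∫ _ in Ioc a b, tail ν (x - b) ∂μ :=
        setIntegral_mono_on (integrable_tail_comp μ ν (by fun_prop)).integrableOn
          (integrableOn_const (measure_ne_top _ _)) measurableSet_Ioc
          fun u hu => tail_antitone ν (by linarith [hu.2])
    _ = tail ν (x - b) * (tail μ a - tail μ b) := by
        rw [setIntegral_const, tail_sub_tail μ hab, smul_eq_mul, mul_comm]

section Asymptotics

variable {γ : ℝ} {μ : Measure ℝ}

lemma tail_pos_of_memL [IsFiniteMeasure μ] (hL : MemL γ μ) (x : ℝ) : 0 < tail μ x := by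
  refine (tail_nonneg μ x).lt_of_ne' fun hx => (Real.exp_pos (γ * 1)).ne' ?_
  refine tendsto_nhds_unique (hL 1) (tendsto_const_nhds.congr' ?_)
  filter_upwards [eventually_ge_atTop (x + 1)] with z hz
  rw [le_antisymm (hx ▸ tail_antitone μ (by linarith)) (tail_nonneg μ _), zero_div]

lemma eventually_abs_tail_sub_sub_mul_le [IsFiniteMeasure μ] (hL : MemL γ μ) (t : ℝ) {η : ℝ}
    (hη : 0 < η) :
    ∀ᶠ z in atTop, |tail μ (z - t) - Real.exp (γ * t) * tail μ z| ≤ η * tail μ z := by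
  filter_upwards [(hL t).eventually (Metric.ball_mem_nhds _ hη)] with z hz
  have hpos := tail_pos_of_memL hL z
  rw [Real.dist_eq] at hz
  calc |tail μ (z - t) - Real.exp (γ * t) * tail μ z|
      = |tail μ (z - t) / tail μ z - Real.exp (γ * t)| * tail μ z := by
        rw [← abs_of_pos hpos, ← abs_mul, abs_of_pos hpos, sub_mul, div_mul_cancel₀ _ hpos.ne']
    _ ≤ η * tail μ z := by gcongr

lemma eventually_mul_tail_le_tail_sub
    (hlim : ∀ t > (0 : ℝ), Real.exp (γ * t) ≤ liminf (fun x => tail μ (x - t) / tail μ x) atTop)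
    {s r : ℝ} (hs : 0 ≤ s) (hr : r < Real.exp (γ * s)) :
    ∀ᶠ z in atTop, r * tail μ z ≤ tail μ (z - s) := by
  rcases hs.eq_or_lt with rfl | hs
  · rw [mul_zero, Real.exp_zero] at hr
    exact Eventually.of_forall fun z => by
      rw [sub_zero]; nlinarith [tail_nonneg μ z]
  have hbdd : IsBoundedUnder (· ≥ ·) atTop fun x => tail μ (x - s) / tail μ x :=
    isBoundedUnder_of_eventually_ge (Eventually.of_forall fun x =>
      div_nonneg (tail_nonneg μ _) (tail_nonneg μ _))
  filter_upwards [eventually_lt_of_lt_liminf (hr.trans_le (hlim s hs)) hbdd] with z hz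
  rcases (tail_nonneg μ z).eq_or_lt with h0 | hpos
  · rw [← h0, mul_zero]; exact tail_nonneg μ _
  · exact ((lt_div_iff₀ hpos).1 hz).le

lemma eventually_mul_tail_le_measureReal_Ioc [IsFiniteMeasure μ] (hL : MemL γ μ) (j : ℝ)
    {r : ℝ} (hr : r < Real.exp (γ * -j) - Real.exp (γ * -(j + 1))) :
    ∀ᶠ B in atTop, r * tail μ B ≤ μ.real (Ioc (B + j) (B + j + 1)) := by
  have hlim : Tendsto (fun B => (tail μ (B + j) - tail μ (B + j + 1)) / tail μ B) atTop
      (𝓝 (Real.exp (γ * -j) - Real.exp (γ * -(j + 1)))) := by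
    refine ((hL (-j)).sub (hL (-(j + 1)))).congr fun B => ?_
    rw [sub_div, sub_neg_eq_add, sub_neg_eq_add, add_assoc]
  filter_upwards [hlim.eventually (eventually_gt_nhds hr)] with B hB
  rw [← tail_sub_tail μ (by linarith)]
  exact ((lt_div_iff₀ (tail_pos_of_memL hL B)).1 hB).le

end Asymptotics

section Strip

variable {γ : ℝ} (μ ν : Measure ℝ) [IsFiniteMeasure ν]

/-- On the strip `(B + j, B + j + 1]` the factor `≈ e^{γj}` gained by `F̄₁(x - B - j)` cancels the
factor `≈ e^{-γj}` lost by `F₂`. -/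
lemma eventually_eventually_mul_tail_mul_tail_le_tail_mul_measureReal_Ioc (hγ : 0 < γ)
    (hL : MemL γ ν)
    (hlim : ∀ t > (0 : ℝ), Real.exp (γ * t) ≤ liminf (fun x => tail μ (x - t) / tail μ x) atTop)
    {j : ℝ} (hj : 0 ≤ j) :
    ∀ᶠ B in atTop, ∀ᶠ x in atTop, (1 - Real.exp (-γ)) / 4 * (tail ν B * tail μ (x - B)) ≤
      tail μ (x - (B + j)) * ν.real (Ioc (B + j) (B + j + 1)) := by
  have hq : Real.exp (-γ) < 1 := Real.exp_lt_one_iff.2 (neg_lt_zero.2 hγ)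
  have hr : 0 ≤ Real.exp (-(γ * j)) * (1 - Real.exp (-γ)) / 2 := by
    have := Real.exp_pos (-(γ * j)); nlinarith
  have hν := eventually_mul_tail_le_measureReal_Ioc hL j
    (r := Real.exp (-(γ * j)) * (1 - Real.exp (-γ)) / 2) (by
      have : Real.exp (γ * -(j + 1)) = Real.exp (-(γ * j)) * Real.exp (-γ) := by
        rw [← Real.exp_add]; ring_nf
      rw [this, mul_neg]
      nlinarith [Real.exp_pos (-(γ * j))])
  have hμ := eventually_mul_tail_le_tail_sub hlim hj (half_lt_self (Real.exp_pos (γ * j)))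
  filter_upwards [hν] with B hB
  filter_upwards [(tendsto_atTop_add_const_right atTop (-B) tendsto_id).eventually hμ] with x hx
  rw [← sub_eq_add_neg, sub_sub] at hx
  have hexp : Real.exp (γ * j) * Real.exp (-(γ * j)) = 1 := by rw [← Real.exp_add]; simp
  calc (1 - Real.exp (-γ)) / 4 * (tail ν B * tail μ (x - B))
      = Real.exp (γ * j) / 2 * tail μ (x - B) *
          (Real.exp (-(γ * j)) * (1 - Real.exp (-γ)) / 2 * tail ν B) := by
        linear_combination (-(1 - Real.exp (-γ)) / 4 * tail ν B * tail μ (x - B)) * hexp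
    _ ≤ _ := mul_le_mul hx hB (mul_nonneg hr (tail_nonneg ν B)) (tail_nonneg μ _)

lemma eventually_eventually_tail_mul_tail_le [IsFiniteMeasure μ] (hγ : 0 < γ) (hL : MemL γ ν)
    (hlim : ∀ t > (0 : ℝ), Real.exp (γ * t) ≤ liminf (fun x => tail μ (x - t) / tail μ x) atTop)
    {ε : ℝ} (hε : 0 < ε) :
    ∀ᶠ B in atTop, ∀ᶠ x in atTop, tail ν B * tail μ (x - B) ≤ ε * tail (mconv μ ν) x := by
  set c := (1 - Real.exp (-γ)) / 4
  have hc : 0 < c := div_pos (sub_pos.2 (Real.exp_lt_one_iff.2 (neg_lt_zero.2 hγ))) four_pos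
  obtain ⟨N, hN⟩ := exists_nat_ge (1 / (ε * c))
  have hstrips := (Filter.eventually_all_finset (Finset.range N)).2 fun j _ =>
    eventually_eventually_mul_tail_mul_tail_le_tail_mul_measureReal_Ioc μ ν hγ hL hlim
      (Nat.cast_nonneg j)
  filter_upwards [hstrips] with B hB
  filter_upwards [(Filter.eventually_all_finset _).2 hB] with x hx
  have hsum : N * (c * (tail ν B * tail μ (x - B))) ≤ tail (mconv μ ν) x :=
    calc (N : ℝ) * (c * (tail ν B * tail μ (x - B)))
        = ∑ _j ∈ Finset.range N, c * (tail ν B * tail μ (x - B)) := by simp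
      _ ≤ _ := Finset.sum_le_sum hx
      _ ≤ _ := sum_tail_mul_measureReal_Ioc_le_tail_mconv μ ν x B N
  have hNc : 1 ≤ ε * (N * c) := by
    rw [div_le_iff₀ (by positivity)] at hN; linarith
  calc tail ν B * tail μ (x - B) ≤ ε * (N * c) * (tail ν B * tail μ (x - B)) :=
        le_mul_of_one_le_left (mul_nonneg (tail_nonneg ν B) (tail_nonneg μ _)) hNc
    _ = ε * (N * (c * (tail ν B * tail μ (x - B)))) := by ring
    _ ≤ ε * tail (mconv μ ν) x := by gcongr

end Strip

lemma abs_tail_mconv_sub_mul_le (μ ν : Measure ℝ) [IsProbabilityMeasure μ]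
    [IsProbabilityMeasure ν] {x t B e η δ : ℝ} (ht : 0 ≤ t) (he : 0 ≤ e) (hη : 0 ≤ η)
    (hν : ∀ z ≥ B, |tail ν (z - t) - e * tail ν z| ≤ η * tail ν z)
    (hμ : ∀ z ≥ x - B, |tail μ (z - t) - e * tail μ z| ≤ δ) :
    |tail (mconv μ ν) (x - t) - e * tail (mconv μ ν) x| ≤
      η * tail (mconv μ ν) x + (1 + e) * δ + e * (e - 1) * (tail ν B * tail μ (x - B)) := by
  rw [tail_mconv_sub_eq_setIntegral_add_integral μ ν x (x - B) t,
    tail_mconv_eq_setIntegral_add_setIntegral_add_integral μ ν x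
      (show x - B - t ≤ x - B by linarith)]
  set V := ∫ u in Iic (x - B - t), tail ν (x - t - u) ∂μ
  set V' := ∫ u in Iic (x - B - t), tail ν (x - u) ∂μ
  set S := ∫ u in Ioc (x - B - t) (x - B), tail ν (x - u) ∂μ
  set Y := ∫ y, tail μ (max (x - y) (x - B)) ∂ν
  set Y' := ∫ y, tail μ (max (x - y) (x - B) - t) ∂ν
  have hint : ∀ a, Integrable (fun u => tail ν (a - u)) μ := fun a =>
    integrable_tail_comp μ ν (by fun_prop)
  have hV : |V - e * V'| ≤ η * V' := by
    have := abs_integral_sub_mul_le (hint (x - t)).integrableOn (hint x).integrableOn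
      ((hint x).const_mul η).integrableOn e <| ae_restrict_of_forall_mem measurableSet_Iic
        fun u (hu : u ≤ x - B - t) => by
          rw [sub_right_comm]; exact hν (x - u) (by linarith)
    rwa [integral_const_mul] at this
  have hY : |Y' - e * Y| ≤ δ := by
    simpa using abs_integral_sub_mul_le (μ := ν) (integrable_tail_comp ν μ (by fun_prop))
      (integrable_tail_comp ν μ (by fun_prop)) (integrable_const δ) e
      (ae_of_all _ fun y => hμ _ (le_max_right _ _))
  have hδ : 0 ≤ δ := (abs_nonneg _).trans (hμ _ le_rfl)
  have hS : S ≤ tail ν B * ((e - 1) * tail μ (x - B) + δ) := by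
    refine (setIntegral_tail_Ioc_le μ ν x (by linarith)).trans ?_
    rw [sub_sub_cancel]
    have := (abs_le.1 (hμ (x - B) le_rfl)).2
    gcongr ?_ * ?_
    · exact tail_nonneg ν B
    · linarith
  have hS₀ : 0 ≤ S := setIntegral_nonneg measurableSet_Ioc fun _ _ => tail_nonneg ν _
  have hY₀ : 0 ≤ Y := integral_nonneg fun _ => tail_nonneg μ _
  have hB := tail_le_one ν B
  calc |V + Y' - e * (V' + S + Y)| = |(V - e * V') + (Y' - e * Y) - e * S| := by ring_nf
    _ ≤ |V - e * V'| + |Y' - e * Y| + e * S :=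
      (abs_sub _ _).trans (add_le_add (abs_add_le _ _) (abs_of_nonneg (mul_nonneg he hS₀)).le)
    _ ≤ _ := by
      linarith [mul_le_mul_of_nonneg_left hS he, mul_nonneg hη (add_nonneg hS₀ hY₀),
        mul_nonneg (mul_nonneg he hδ) (sub_nonneg.2 hB)]

lemma eventually_eventually_mul_tail_mul_tail_le {γ : ℝ} (μ ν : Measure ℝ) [IsFiniteMeasure μ]
    [IsFiniteMeasure ν] (hγ : 0 ≤ γ) (hL : MemL γ ν)
    (hlim : ∀ t > (0 : ℝ), Real.exp (γ * t) ≤ liminf (fun x => tail μ (x - t) / tail μ x) atTop)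
    {t ε : ℝ} (ht : 0 < t) (hε : 0 < ε) :
    ∀ᶠ B in atTop, ∀ᶠ x in atTop, Real.exp (γ * t) * (Real.exp (γ * t) - 1) *
      (tail ν B * tail μ (x - B)) ≤ ε * tail (mconv μ ν) x := by
  rcases hγ.eq_or_lt with rfl | hγ
  · simp only [zero_mul, Real.exp_zero, sub_self, mul_zero]
    exact Eventually.of_forall fun _ => Eventually.of_forall fun x =>
      mul_nonneg hε.le (tail_nonneg _ x)
  have hK : 0 < Real.exp (γ * t) * (Real.exp (γ * t) - 1) :=
    mul_pos (Real.exp_pos _) (sub_pos.2 (Real.one_lt_exp_iff.2 (mul_pos hγ ht)))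
  filter_upwards [eventually_eventually_tail_mul_tail_le μ ν hγ hL hlim (div_pos hε hK)] with B hB
  filter_upwards [hB] with x hx
  calc _ ≤ Real.exp (γ * t) * (Real.exp (γ * t) - 1) * (ε / (Real.exp (γ * t) *
        (Real.exp (γ * t) - 1)) * tail (mconv μ ν) x) := mul_le_mul_of_nonneg_left hx hK.le
    _ = ε * tail (mconv μ ν) x := by rw [← mul_assoc, mul_div_cancel₀ _ hK.ne']

lemma isLittleO_tail_mconv_sub_mul (F₁ F₂ : Measure ℝ) [IsProbabilityMeasure F₁]
    [IsProbabilityMeasure F₂] (hs₁ : F₁ (Iio 0) = 0) {γ : ℝ} (hγ : 0 ≤ γ) (hL₂ : MemL γ F₂)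
    (hlim₁ : ∀ t > (0 : ℝ),
      Real.exp (γ * t) ≤ liminf (fun x => tail F₁ (x - t) / tail F₁ x) atTop)
    {t : ℝ} (ht : 0 < t)
    (ho : (fun x => |tail F₁ (x - t) - Real.exp (γ * t) * tail F₁ x|) =o[atTop] tail F₂) :
    (fun x => tail (mconv F₁ F₂) (x - t) - Real.exp (γ * t) * tail (mconv F₁ F₂) x)
      =o[atTop] tail (mconv F₁ F₂) := by
  set e := Real.exp (γ * t)
  have he : 1 ≤ e := Real.one_le_exp (mul_nonneg hγ ht.le)
  refine IsLittleO.of_bound fun ε hε => ?_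
  obtain ⟨Z, hZ⟩ := eventually_atTop.1
    (eventually_abs_tail_sub_sub_mul_le hL₂ t (by positivity : 0 < ε / 3))
  obtain ⟨B, hBZ, hB⟩ := ((eventually_ge_atTop Z).and
    (eventually_eventually_mul_tail_mul_tail_le F₁ F₂ hγ hL₂ hlim₁ ht
      (by positivity : 0 < ε / 3))).exists
  -- `F̄₂(x - B) / F̄₂(x) → e^{γB} < C`
  set C := Real.exp (γ * B) + 1
  have hC : ∀ᶠ x in atTop, tail F₂ (x - B) ≤ C * tail F₂ x := by
    filter_upwards [eventually_abs_tail_sub_sub_mul_le hL₂ B one_pos] with x hx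
    linarith [(abs_le.1 hx).2]
  have hC₀ : 0 < C := by positivity
  set δ := ε / (3 * (1 + e) * C)
  have hδ : 0 < δ := by positivity
  obtain ⟨A, hA⟩ := eventually_atTop.1 (ho.def hδ)
  filter_upwards [hB, hC, eventually_ge_atTop (A + B)] with x hxB hxC hxA
  have hμ : ∀ z ≥ x - B, |tail F₁ (z - t) - e * tail F₁ z| ≤ δ * tail F₂ (x - B) := by
    intro z hz
    have := hA z (by linarith)
    rw [Real.norm_eq_abs, abs_abs, Real.norm_of_nonneg (tail_nonneg _ _)] at this
    exact this.trans (mul_le_mul_of_nonneg_left (tail_antitone F₂ hz) hδ.le)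
  have key := abs_tail_mconv_sub_mul_le F₁ F₂ ht.le (by positivity) (by positivity)
    (fun z hz => hZ z (hBZ.trans hz)) hμ
  have hF₂ := tail_le_tail_mconv F₂ hs₁ x
  have hδC : (1 + e) * (δ * tail F₂ (x - B)) ≤ ε / 3 * tail (mconv F₁ F₂) x := by
    calc (1 + e) * (δ * tail F₂ (x - B)) ≤ (1 + e) * δ * (C * tail F₂ x) := by
          rw [← mul_assoc]; gcongr
      _ = ε / 3 * tail F₂ x := by simp only [δ]; field_simp
      _ ≤ ε / 3 * tail (mconv F₁ F₂) x := by gcongr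
  rw [Real.norm_eq_abs, Real.norm_of_nonneg (tail_nonneg _ _)]
  linarith

theorem stmt2_general (F₁ F₂ : Measure ℝ) [IsProbabilityMeasure F₁] [IsProbabilityMeasure F₂]
    (hs₁ : F₁ (Set.Iio 0) = 0)
    (γ : ℝ) (hγ : 0 ≤ γ) (hL₂ : MemL γ F₂)
    (hlim₁ : ∀ t > (0 : ℝ),
      Real.exp (γ * t) ≤ Filter.liminf (fun x => tail F₁ (x - t) / tail F₁ x) Filter.atTop)
    (ho : ∀ t > (0 : ℝ),
      (fun x => |tail F₁ (x - t) - Real.exp (γ * t) * tail F₁ x|) =o[Filter.atTop]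
        fun x => tail F₂ x) :
    MemL γ (mconv F₁ F₂) := by
  have hpos : ∀ x, tail (mconv F₁ F₂) x ≠ 0 := fun x =>
    ((tail_pos_of_memL hL₂ x).trans_le (tail_le_tail_mconv F₂ hs₁ x)).ne'
  exact tendsto_sub_div_of_forall_pos (Eventually.of_forall hpos) fun t ht =>
    tendsto_div_of_isLittleO_sub_mul (Eventually.of_forall hpos)
      (isLittleO_tail_mconv_sub_mul F₁ F₂ hs₁ hγ hL₂ hlim₁ ht (ho t ht))

theorem stmt2 (F₁ F₂ : Measure ℝ) [IsProbabilityMeasure F₁] [IsProbabilityMeasure F₂]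
    (hs₁ : F₁ (Set.Iio 0) = 0) (hs₂ : F₂ (Set.Iio 0) = 0)
    (γ : ℝ) (hγ : 0 ≤ γ) (hL₂ : MemL γ F₂)
    (hlim₁ : ∀ t > (0 : ℝ),
      Real.exp (γ * t) ≤ Filter.liminf (fun x => tail F₁ (x - t) / tail F₁ x) Filter.atTop)
    (hlim₂ : ∀ t > (0 : ℝ),
      Real.exp (γ * t) ≤ Filter.liminf (fun x => tail F₂ (x - t) / tail F₂ x) Filter.atTop)
    (ho : ∀ t > (0 : ℝ),
      (fun x => |tail F₁ (x - t) - Real.exp (γ * t) * tail F₁ x|) =o[Filter.atTop]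
        fun x => tail F₂ x) :
    MemL γ (mconv F₁ F₂) :=
  stmt2_general F₁ F₂ hs₁ γ hγ hL₂ hlim₁ ho
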